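/- arXiv:1910.08187 — 2 statements merged into one kernel-verified Lean document; each statement's English description precedes it below -/
import Mathlib

section
/- Define V_1(γ, β) = γ e^{−2γ²} sin(4β). Then over all real γ, β, the minimum of V_1 equals −1/√(4e), and it is attained at γ = 1/2, β = −π/8. -/
lemma sqrt4e : Real.sqrt (4 * Real.exp 1) = 2 * Real.sqrt (Real.exp 1) := by
  rw [show (4:ℝ) * Real.exp 1 = 2^2 * Real.exp 1 by ring, Real.sqrt_mul (by positivity),
    Real.sqrt_sq (by norm_num)]

lemma key (γ : ℝ) : |γ * Real.exp (-2 * γ ^ 2)| ≤ 1 / (2 * Real.sqrt (Real.exp 1)) := by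
  have hse : (0:ℝ) < Real.sqrt (Real.exp 1) := Real.sqrt_pos.2 (Real.exp_pos 1)
  have hE : Real.exp (-2 * γ ^ 2) ^ 2 = Real.exp (-4 * γ ^ 2) := by
    rw [sq, ← Real.exp_add]; ring_nf
  have h1 : 4 * γ ^ 2 ≤ Real.exp (4 * γ ^ 2 - 1) := by
    have := Real.add_one_le_exp (4 * γ ^ 2 - 1); linarith
  have h2 : Real.exp (4 * γ ^ 2 - 1) * Real.exp (-4 * γ ^ 2) = Real.exp (-1) := by
    rw [← Real.exp_add]; ring_nf
  have h3 : Real.exp (-1) * Real.exp 1 = 1 := by rw [← Real.exp_add]; norm_num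
  have hs2 : Real.sqrt (Real.exp 1) ^ 2 = Real.exp 1 := Real.sq_sqrt (Real.exp_pos 1).le
  have hsq : (γ * Real.exp (-2 * γ ^ 2)) ^ 2 ≤ (1 / (2 * Real.sqrt (Real.exp 1))) ^ 2 := by
    have hm := mul_le_mul_of_nonneg_right h1 (Real.exp_pos (-4 * γ ^ 2)).le
    rw [mul_pow, hE, div_pow, one_pow, mul_pow, hs2]
    rw [le_div_iff₀ (by positivity)]
    nlinarith [Real.exp_pos (-4 * γ ^ 2), Real.exp_pos 1]
  calc |γ * Real.exp (-2 * γ ^ 2)| = Real.sqrt ((γ * Real.exp (-2 * γ ^ 2)) ^ 2) :=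
        (Real.sqrt_sq_eq_abs _).symm
    _ ≤ Real.sqrt ((1 / (2 * Real.sqrt (Real.exp 1))) ^ 2) := Real.sqrt_le_sqrt hsq
    _ = 1 / (2 * Real.sqrt (Real.exp 1)) := Real.sqrt_sq (by positivity)

theorem stmt_10 :
    (∀ γ β : ℝ, -(1 / Real.sqrt (4 * Real.exp 1))
        ≤ γ * Real.exp (-2 * γ ^ 2) * Real.sin (4 * β)) ∧
      (1 / 2 : ℝ) * Real.exp (-2 * (1 / 2 : ℝ) ^ 2) * Real.sin (4 * (-(Real.pi / 8)))
        = -(1 / Real.sqrt (4 * Real.exp 1)) := by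
  constructor
  · intro γ β
    rw [sqrt4e]
    set a := γ * Real.exp (-2 * γ ^ 2)
    have h1 : |a * Real.sin (4 * β)| ≤ |a| := by
      rw [abs_mul]
      calc |a| * |Real.sin (4 * β)| ≤ |a| * 1 :=
            mul_le_mul_of_nonneg_left (abs_le.2 ⟨Real.neg_one_le_sin _, Real.sin_le_one _⟩) (abs_nonneg _)
        _ = |a| := mul_one _
    have := key γ
    have h2 := neg_abs_le (a * Real.sin (4 * β))
    linarith
  · have hs : Real.sin (4 * (-(Real.pi / 8))) = -1 := by
      rw [show 4 * (-(Real.pi / 8)) = -(Real.pi / 2) by ring, Real.sin_neg, Real.sin_pi_div_two]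
    rw [hs, sqrt4e]
    have hse : (0:ℝ) < Real.sqrt (Real.exp 1) := Real.sqrt_pos.2 (Real.exp_pos 1)
    have h : Real.exp (-2 * (1/2:ℝ)^2) = 1 / Real.sqrt (Real.exp 1) := by
      rw [show (-2 * (1/2:ℝ)^2) = -(1/2) by norm_num, Real.exp_neg, Real.exp_half, inv_eq_one_div]
    rw [h]; field_simp
end

section
/- Let Q_a = ∏_{j=1}^p (cos β_j)^{θ(a_j)+θ(a_{−j})} (sin β_j)^{θ(−a_j)+θ(−a_{−j})} i^{θ(−a_j)−θ(−a_{−j})} for a ∈ {±1}^{2p}, where θ(b) = (1+b)/2. If a ∈ A_ℓ for some 1 ≤ ℓ ≤ p and ā is its bar (flipping signs at positions ±(p−ℓ+1)), then Q_{ā} = −Q_a. -/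
abbrev SKConf (p : ℕ) := Fin p × Bool → ℤˣ

def skPart (p ℓ : ℕ) : Finset (SKConf p) :=
  if ℓ = p + 1 then
    Finset.univ.filter (fun a => ∀ i : Fin p, a (i, false) = a (i, true))
  else
    Finset.univ.filter (fun a =>
      (∀ i : Fin p, p - ℓ + 1 ≤ (i : ℕ) → a (i, false) = a (i, true)) ∧
        ∀ i : Fin p, (i : ℕ) = p - ℓ → a (i, false) = -(a (i, true)))

def barConf (p ℓ : ℕ) (a : SKConf p) : SKConf p :=
  fun x => if (x.1 : ℕ) = p - ℓ then -(a x) else a x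

/-- θ(b) = (1+b)/2, so θ(1) = 1 and θ(-1) = 0. -/
def skTheta (u : ℤˣ) : ℤ := (1 + (u : ℤ)) / 2

/-- `Q_a = ∏_j (cos β_j)^{θ(a_j)+θ(a_{-j})} (sin β_j)^{θ(-a_j)+θ(-a_{-j})}
i^{θ(-a_j)-θ(-a_{-j})}`. -/
noncomputable def skQ {p : ℕ} (β : Fin p → ℝ) (a : SKConf p) : ℂ :=
  ∏ j : Fin p,
    (Complex.cos (β j)) ^ (skTheta (a (j, true)) + skTheta (a (j, false))) *
      (Complex.sin (β j)) ^ (skTheta (-(a (j, true))) + skTheta (-(a (j, false)))) *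
      Complex.I ^ (skTheta (-(a (j, true))) - skTheta (-(a (j, false))))

theorem Fintype.prod_eq_neg_of_eq_of_ne {ι R : Type*} [Fintype ι] [DecidableEq ι] [CommMonoid R]
    [HasDistribNeg R] {f g : ι → R} (r : ι) (hr : g r = -f r) (hne : ∀ j ≠ r, g j = f j) :
    ∏ j, g j = -∏ j, f j := by
  rw [← Finset.mul_prod_erase _ g (Finset.mem_univ r),
    ← Finset.mul_prod_erase _ f (Finset.mem_univ r),
    Finset.prod_congr rfl fun j hj => hne j (Finset.ne_of_mem_erase hj), hr, neg_mul]

noncomputable def skQFactor (b : ℝ) (u v : ℤˣ) : ℂ :=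
  Complex.cos b ^ (skTheta u + skTheta v) * Complex.sin b ^ (skTheta (-u) + skTheta (-v)) *
    Complex.I ^ (skTheta (-u) - skTheta (-v))

theorem skQ_eq_prod_skQFactor {p : ℕ} (β : Fin p → ℝ) (a : SKConf p) :
    skQ β a = ∏ j, skQFactor (β j) (a (j, true)) (a (j, false)) :=
  rfl

/-- On an anti-symmetric pair the cosine and sine exponents are both `1`; flipping the pair only
swaps the power of `i` between `i` and `i⁻¹ = -i`. -/
theorem skQFactor_neg_neg (b : ℝ) (u : ℤˣ) : skQFactor b (-u) u = -skQFactor b u (-u) := by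
  rcases Int.units_eq_one_or u with rfl | rfl <;> norm_num [skQFactor, skTheta]

theorem barConf_apply_of_eq {p ℓ : ℕ} (a : SKConf p) {i : Fin p} (hi : (i : ℕ) = p - ℓ)
    (b : Bool) : barConf p ℓ a (i, b) = -a (i, b) :=
  if_pos hi

theorem barConf_apply_of_ne {p ℓ : ℕ} (a : SKConf p) {i : Fin p} (hi : (i : ℕ) ≠ p - ℓ)
    (b : Bool) : barConf p ℓ a (i, b) = a (i, b) :=
  if_neg hi

theorem antisymm_of_mem_skPart {p ℓ : ℕ} (hℓ : ℓ ≠ p + 1) {a : SKConf p} (ha : a ∈ skPart p ℓ)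
    {i : Fin p} (hi : (i : ℕ) = p - ℓ) : a (i, false) = -a (i, true) := by
  rw [skPart, if_neg hℓ, Finset.mem_filter] at ha
  exact ha.2.2 i hi

theorem stmt_19 (p ℓ : ℕ) (h1 : 1 ≤ ℓ) (h2 : ℓ ≤ p) (β : Fin p → ℝ)
    (a : SKConf p) (ha : a ∈ skPart p ℓ) :
    skQ β (barConf p ℓ a) = -skQ β a := by
  let r : Fin p := ⟨p - ℓ, by omega⟩
  have hr : (r : ℕ) = p - ℓ := rfl
  rw [skQ_eq_prod_skQFactor, skQ_eq_prod_skQFactor]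
  refine Fintype.prod_eq_neg_of_eq_of_ne r ?_ fun j hj => ?_
  · rw [barConf_apply_of_eq a hr, barConf_apply_of_eq a hr,
      antisymm_of_mem_skPart (by omega) ha hr, neg_neg, skQFactor_neg_neg]
  · have hj' : (j : ℕ) ≠ p - ℓ := fun h => hj (Fin.ext h)
    rw [barConf_apply_of_ne a hj', barConf_apply_of_ne a hj']
end
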